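/- arXiv:1602.03109 — 2 statements merged into one kernel-verified Lean document; each statement's English description precedes it below -/
import Mathlib

section
/- Let f : {0,1}^n → {0,1}^n be an and-or-network with interaction graph G. If G has no two independent cycles, then f has at most ν(G)+1 fixed points. -/
open Classical

section Defs

variable {V : Type*}

/-- `f_v` depends on input `u`. -/
def Depends (f : (V → Bool) → V → Bool) (u v : V) : Prop :=
  ∃ x y : V → Bool, (∀ w, w ≠ u → x w = y w) ∧ f x v ≠ f y v

/-- The arcs of a cycle given by the list of its vertices `v₀ … v_m`:
`(v₀,v₁), …, (v_m, v₀)`. -/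
def CycArcs (l : List V) : List (V × V) :=
  (l ++ l.take 1).zip ((l ++ l.take 1).tail)

/-- A (directed) cycle of the digraph `G`, given by its list of (distinct) vertices.
Loops (cycles of length one) are allowed. -/
def IsCycle (G : V → V → Prop) (l : List V) : Prop :=
  l ≠ [] ∧ l.Nodup ∧ ∀ a ∈ CycArcs l, G a.1 a.2

/-- The arcs of a path given by the list of its vertices. -/
def PathArcs (l : List V) : List (V × V) := l.zip l.tail

/-- A (directed) path of `G` with at least one arc, with distinct vertices except that
the first and last vertex may coincide. -/
def IsPath (G : V → V → Prop) (l : List V) : Prop :=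
  2 ≤ l.length ∧ l.dropLast.Nodup ∧ l.tail.Nodup ∧ ∀ a ∈ PathArcs l, G a.1 a.2

/-- A packing: a collection of pairwise vertex-disjoint cycles. -/
def IsPacking (G : V → V → Prop) (P : List (List V)) : Prop :=
  (∀ l ∈ P, IsCycle G l) ∧ P.Pairwise fun l₁ l₂ => ∀ v ∈ l₁, v ∉ l₂

/-- A feedback vertex set: a set of vertices meeting every cycle. -/
def IsFVS (G : V → V → Prop) (I : Finset V) : Prop :=
  ∀ l : List V, IsCycle G l → ∃ v ∈ l, v ∈ I

/-- `τ(G)`: minimum size of a feedback vertex set. -/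
noncomputable def tau [Fintype V] (G : V → V → Prop) : ℕ :=
  sInf {k | ∃ I : Finset V, IsFVS G I ∧ I.card = k}

/-- `ν(G)`: maximum number of pairwise vertex-disjoint cycles. -/
noncomputable def nu (G : V → V → Prop) : ℕ :=
  sSup {k | ∃ P : List (List V), IsPacking G P ∧ P.length = k}

/-- A source: a vertex of in-degree zero. -/
def IsSource (G : V → V → Prop) (v : V) : Prop := ∀ u, ¬ G u v

/-- A principal path w.r.t. a packing `P`: a path none of whose arcs and none of whose
internal vertices belong to a cycle of the packing. -/
def IsPrincipal (G : V → V → Prop) (P : List (List V)) (l : List V) : Prop :=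
  IsPath G l ∧ (∀ a ∈ PathArcs l, ∀ C ∈ P, a ∉ CycArcs C) ∧
    ∀ v ∈ l.tail.dropLast, ∀ C ∈ P, v ∉ C

/-- There is a principal path (w.r.t. packing `P`) from a vertex satisfying `A` to `v`. -/
def PrincipalFrom (G : V → V → Prop) (P : List (List V)) (A : V → Prop) (v : V) : Prop :=
  ∃ l : List V, IsPrincipal G P l ∧ (∃ u, l.head? = some u ∧ A u) ∧ l.getLast? = some v

/-- A special packing. -/
def IsSpecialPacking (G : V → V → Prop) (P : List (List V)) : Prop :=
  IsPacking G P ∧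
    ∀ Ci ∈ P, ∀ v ∈ Ci,
      (∃ Cj ∈ P, Cj ≠ Ci ∧ PrincipalFrom G P (fun u => u ∈ Cj) v) →
      (PrincipalFrom G P (fun u => u ∈ Ci) v ∨ PrincipalFrom G P (IsSource G) v)

/-- `ν*(G)`: maximum size of a special packing. -/
noncomputable def nuStar (G : V → V → Prop) : ℕ :=
  sSup {k | ∃ P : List (List V), IsSpecialPacking G P ∧ P.length = k}

/-- Two vertex-disjoint cycles are independent if there is no arc between them. -/
def Independent (G : V → V → Prop) (C₁ C₂ : List V) : Prop :=
  (∀ v ∈ C₁, v ∉ C₂) ∧ ∀ u ∈ C₁, ∀ v ∈ C₂, ¬ G u v ∧ ¬ G v u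

/-- The arc `uv` is positive. -/
def PosArc [DecidableEq V] (f : (V → Bool) → V → Bool) (u v : V) : Prop :=
  ∀ x : V → Bool, x u = false → f x v ≤ f (Function.update x u true) v

/-- The arc `uv` is negative. -/
def NegArc [DecidableEq V] (f : (V → Bool) → V → Bool) (u v : V) : Prop :=
  ∀ x : V → Bool, x u = false → f (Function.update x u true) v ≤ f x v

/-- The sign of the arc `uv` in the signed interaction graph of `f`. -/
noncomputable def arcSign [DecidableEq V] (f : (V → Bool) → V → Bool) (u v : V) : ℤ :=
  if PosArc f u v then 1 else if NegArc f u v then -1 else 0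

/-- The sign of a cycle: product of the signs of its arcs. -/
def CycleSign (σ : V → V → ℤ) (l : List V) : ℤ :=
  ((CycArcs l).map fun a => σ a.1 a.2).prod

/-- `ν⁺(G,σ)`: maximum number of pairwise vertex-disjoint non-negative cycles. -/
noncomputable def nuPlus (G : V → V → Prop) (σ : V → V → ℤ) : ℕ :=
  sSup {k | ∃ P : List (List V),
    IsPacking G P ∧ (∀ C ∈ P, 0 ≤ CycleSign σ C) ∧ P.length = k}

/-- A monotone feedback vertex set of `(G,σ)`. -/
def IsMonFVS (G : V → V → Prop) (σ : V → V → ℤ) (J : Finset V) : Prop :=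
  IsFVS G J ∧ ∀ u v, G u v → σ u v ≠ 1 → v ∈ J

/-- `τ_m(G,σ)`: minimum size of a monotone feedback vertex set. -/
noncomputable def tauM [Fintype V] (G : V → V → Prop) (σ : V → V → ℤ) : ℕ :=
  sInf {k | ∃ J : Finset V, IsMonFVS G σ J ∧ J.card = k}

/-- The `I`-switch of the arc-labelling `σ`. -/
noncomputable def switchSign (σ : V → V → ℤ) (I : Finset V) (u v : V) : ℤ :=
  if ((u ∈ I) ↔ (v ∈ I)) then σ u v else -σ u v

/-- `τ*_m(G,σ)`: minimum of `τ_m` over all switches of `(G,σ)`. -/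
noncomputable def tauMStar [Fintype V] (G : V → V → Prop) (σ : V → V → ℤ) : ℕ :=
  sInf {k | ∃ I : Finset V, tauM G (switchSign σ I) = k}

end Defs

section Patterns

variable {m : Type*}

/-- A `k`-pattern in `P ⊆ {0,1}^m`. -/
def IsPattern (P : Set (m → Bool)) (k : ℕ) (X Y : Fin k → m → Bool) : Prop :=
  Function.Injective X ∧ Function.Injective Y ∧
    (∀ p, X p ∈ P) ∧ (∀ p, Y p ∈ P) ∧ ∀ p q, X p ≤ Y q ↔ p ≠ q

/-- `P` has a `k`-pattern. -/
def HasPattern (P : Set (m → Bool)) (k : ℕ) : Prop :=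
  ∃ X Y, IsPattern P k X Y

/-- `P` has a special `k`-pattern: a `k`-pattern with `y^p = complement of x^p`. -/
def HasSpecialPattern (P : Set (m → Bool)) (k : ℕ) : Prop :=
  ∃ X Y, IsPattern P k X Y ∧ ∀ p, Y p = fun v => !(X p v)

end Patterns


section AuxProof

lemma exists_dep {n : ℕ} (f : (Fin n → Bool) → Fin n → Bool) :
    ∀ (k : ℕ) (x y : Fin n → Bool) (v : Fin n),
      (Finset.univ.filter fun u => x u ≠ y u).card ≤ k →
      f x v ≠ f y v → ∃ u, Depends f u v ∧ x u ≠ y u := by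
  intro k
  induction k with
  | zero =>
    intro x y v hc hne
    exfalso
    apply hne
    have hxy : x = y := by
      funext u
      by_contra h
      have hu : u ∈ Finset.univ.filter fun u => x u ≠ y u := by simp [h]
      have := Finset.card_pos.mpr ⟨u, hu⟩
      omega
    rw [hxy]
  | succ k ih =>
    intro x y v hc hne
    by_cases hxy : x = y
    · exact absurd (by rw [hxy]) hne
    · have hex : ∃ u, x u ≠ y u := by
        by_contra h; push_neg at h; exact hxy (funext h)
      obtain ⟨u, hu⟩ := hex
      set y' := Function.update y u (x u) with hy'
      by_cases h1 : f y' v = f y v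
      · have hne' : f x v ≠ f y' v := by rw [h1]; exact hne
        have hsub : (Finset.univ.filter fun w => x w ≠ y' w) ⊆
            (Finset.univ.filter fun w => x w ≠ y w).erase u := by
          intro w hw
          simp only [Finset.mem_filter, Finset.mem_univ, true_and] at hw
          rcases eq_or_ne w u with rfl | hwu
          · simp [hy', Function.update_self] at hw
          · rw [hy', Function.update_of_ne hwu] at hw
            simp [Finset.mem_erase, hwu, hw]
        have hu' : u ∈ (Finset.univ.filter fun w => x w ≠ y w) := by simp [hu]
        have hcard : (Finset.univ.filter fun w => x w ≠ y' w).card ≤ k := by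
          have ha := Finset.card_le_card hsub
          have hb := Finset.card_erase_of_mem hu'
          have hcpos := Finset.card_pos.mpr ⟨u, hu'⟩
          omega
        obtain ⟨w, hw1, hw2⟩ := ih x y' v hcard hne'
        refine ⟨w, hw1, ?_⟩
        rcases eq_or_ne w u with rfl | hwu
        · exact hu
        · rwa [hy', Function.update_of_ne hwu] at hw2
      · exact ⟨u, ⟨y', y, fun w hw => Function.update_of_ne hw _ _, h1⟩, hu⟩

lemma exists_cycle {n : ℕ} (G : Fin n → Fin n → Prop) (D : Finset (Fin n)) (v₀ : Fin n)
    (hv₀ : v₀ ∈ D) (hcl : ∀ v ∈ D, ∃ u ∈ D, G u v) :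
    ∃ l : List (Fin n), IsCycle G l ∧ ∀ v ∈ l, v ∈ D := by
  have hcl' : ∀ v : Fin n, ∃ u, v ∈ D → u ∈ D ∧ G u v := by
    intro v
    by_cases h : v ∈ D
    · obtain ⟨u, hu, hGu⟩ := hcl v h
      exact ⟨u, fun _ => ⟨hu, hGu⟩⟩
    · exact ⟨v, fun h' => absurd h' h⟩
  choose g hg using hcl'
  set a : ℕ → Fin n := fun i => g^[i] v₀ with ha
  have hsucc : ∀ s : ℕ, a (s+1) = g (a s) := fun s => Function.iterate_succ_apply' g s v₀
  have haD : ∀ i, a i ∈ D := by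
    intro i
    induction i with
    | zero => exact hv₀
    | succ i ih => rw [hsucc]; exact (hg (a i) ih).1
  have hstep : ∀ s : ℕ, G (a (s+1)) (a s) := by
    intro s
    rw [hsucc]
    exact (hg (a s) (haD s)).2
  have hrep : ∃ j, ∃ i, i < j ∧ a i = a j := by
    obtain ⟨i, j, hij, h⟩ := Finite.exists_ne_map_eq_of_infinite a
    rcases lt_or_gt_of_ne hij with h' | h'
    · exact ⟨j, i, h', h⟩
    · exact ⟨i, j, h', h.symm⟩
  set j := Nat.find hrep with hj
  obtain ⟨i, hij, hai⟩ := Nat.find_spec hrep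
  have hinj : ∀ p q, p < q → q < j → a p ≠ a q := by
    intro p q hpq hqj h
    exact Nat.find_min hrep hqj ⟨p, hpq, h⟩
  set m := j - i with hm
  have hm1 : 1 ≤ m := by omega
  set l : List (Fin n) := (List.range m).map (fun k => a (j - 1 - k)) with hl
  have hlen : l.length = m := by simp [hl]
  have hmem : ∀ v ∈ l, v ∈ D := by
    intro v hv
    simp only [hl, List.mem_map, List.mem_range] at hv
    obtain ⟨k, _, rfl⟩ := hv
    exact haD _
  have hlget : ∀ (k : ℕ) (hk : k < l.length), l[k] = a (j - 1 - k) := by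
    intro k hk
    simp [hl]
  refine ⟨l, ⟨?_, ?_, ?_⟩, hmem⟩
  · intro h
    rw [h] at hlen
    simp at hlen
    omega
  · apply List.Nodup.map_on _ (List.nodup_range (n := m))
    intro p hp q hq hpq
    simp only [List.mem_range] at hp hq
    by_contra hne
    rcases Nat.lt_or_ge p q with h' | h'
    · exact hinj _ _ (by omega) (by omega) hpq.symm
    · have h'' : q < p := by omega
      exact hinj _ _ (by omega) (by omega) hpq
  · intro p hp
    unfold CycArcs at hp
    rw [List.mem_iff_getElem] at hp
    obtain ⟨k, hk, hpk⟩ := hp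
    have hlen2 : (l ++ l.take 1).length = m + 1 := by
      rw [List.length_append, hlen, List.length_take]
      omega
    have hkm : k < m := by
      rw [List.length_zip, List.length_tail, hlen2] at hk
      omega
    rw [List.getElem_zip, List.getElem_tail] at hpk
    have e1 : (l ++ l.take 1)[k]'(by omega) = a (j-1-k) := by
      rw [List.getElem_append_left (by omega)]
      exact hlget k (by omega)
    subst hpk
    simp only [e1]
    rcases Nat.lt_or_ge (k+1) m with hk1 | hk1
    · have e2 : (l ++ l.take 1)[k+1]'(by omega) = a (j-1-(k+1)) := by
        rw [List.getElem_append_left (by omega)]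
        exact hlget (k+1) (by omega)
      simp only [e2]
      have hrw : j-1-k = (j-2-k)+1 := by omega
      rw [hrw, show j-1-(k+1) = j-2-k by omega]
      exact hstep _
    · have hk1' : k + 1 = m := by omega
      have e2 : (l ++ l.take 1)[k+1]'(by omega) = a (j-1) := by
        rw [List.getElem_append_right (by omega)]
        have hrw : (l.take 1)[k+1 - l.length]'(by simp [hlen]; omega) =
            l[k+1-l.length]'(by omega) := by
          apply List.getElem_take
        rw [hrw, hlget _ (by omega)]
        congr 1
        omega
      simp only [e2]
      have hik : j - 1 - k = i := by omega
      rw [hik, hai]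
      have := hstep (j-1)
      rwa [show j-1+1 = j by omega] at this

lemma cycle_in_diff {n : ℕ} (f : (Fin n → Bool) → Fin n → Bool)
    (G : Fin n → Fin n → Prop) (hG : ∀ u v, G u v ↔ Depends f u v)
    (x y : Fin n → Bool) (hx : f x = x) (hy : f y = y) (hxy : x ≠ y) :
    ∃ l, IsCycle G l ∧ ∀ v ∈ l, x v ≠ y v := by
  classical
  set D := Finset.univ.filter (fun v => x v ≠ y v) with hD
  have hne : D.Nonempty := by
    have : ∃ v, x v ≠ y v := by
      by_contra h; push_neg at h; exact hxy (funext h)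
    obtain ⟨v, hv⟩ := this
    exact ⟨v, by simp [hD, hv]⟩
  have hcl : ∀ v ∈ D, ∃ u ∈ D, G u v := by
    intro v hv
    simp only [hD, Finset.mem_filter, Finset.mem_univ, true_and] at hv
    have hfv : f x v ≠ f y v := by rw [congrFun hx, congrFun hy]; exact hv
    obtain ⟨u, hdep, hne'⟩ := exists_dep f _ x y v le_rfl hfv
    exact ⟨u, by simp [hD, hne'], (hG u v).mpr hdep⟩
  obtain ⟨l, h1, h2⟩ := exists_cycle G D hne.choose hne.choose_spec hcl
  refine ⟨l, h1, fun v hv => ?_⟩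
  have := h2 v hv
  simpa [hD] using this

lemma exists_chain_list {α : Type*} [PartialOrder α] [DecidableEq α] :
    ∀ (k : ℕ) (s : Finset α), s.card = k →
      (∀ x ∈ s, ∀ y ∈ s, x ≤ y ∨ y ≤ x) →
      ∃ L : List α, L.Pairwise (· < ·) ∧ L.length = k ∧ ∀ x ∈ L, x ∈ s := by
  intro k
  induction k with
  | zero => intro s h _; exact ⟨[], by simp⟩
  | succ k ih =>
    intro s hcard htot
    have hne : s.Nonempty := by rw [← Finset.card_pos]; omega
    obtain ⟨m, hm, hmin⟩ : ∃ m ∈ s, ∀ x ∈ s, ¬ x < m := by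
      obtain ⟨m, hm⟩ := Finset.exists_minimal hne
      exact ⟨m, hm.1, fun x hx hlt => absurd (hm.2 hx hlt.le) (not_le_of_gt hlt)⟩
    obtain ⟨L, hL1, hL2, hL3⟩ := ih (s.erase m) (by rw [Finset.card_erase_of_mem hm]; omega)
      (fun x hx y hy => htot x (Finset.mem_of_mem_erase hx) y (Finset.mem_of_mem_erase hy))
    refine ⟨m :: L, ?_, by simp [hL2], ?_⟩
    · refine List.pairwise_cons.mpr ⟨?_, hL1⟩
      intro x hx
      have hx' := hL3 x hx
      have hxs := Finset.mem_of_mem_erase hx'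
      have hne' : x ≠ m := Finset.ne_of_mem_erase hx'
      rcases htot m hm x hxs with h | h
      · exact lt_of_le_of_ne h hne'.symm
      · exact absurd (lt_of_le_of_ne h hne') (hmin x hxs)
    · intro x hx
      rcases List.mem_cons.mp hx with rfl | hx'
      · exact hm
      · exact Finset.mem_of_mem_erase (hL3 x hx')

lemma packing_length_le {n : ℕ} (G : Fin n → Fin n → Prop) (P : List (List (Fin n)))
    (hP : IsPacking G P) : P.length ≤ n := by
  rcases Nat.eq_zero_or_pos n with rfl | hn
  · match P, hP with
    | [], _ => simp
    | l :: P', hP =>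
      have hc := hP.1 l List.mem_cons_self
      obtain ⟨hne, _, _⟩ := hc
      match l, hne with
      | v :: _, _ => exact absurd v.2 (by omega)
  · have : Inhabited (Fin n) := ⟨⟨0, hn⟩⟩
    have hnd : (P.map (fun l => l.head!)).Nodup := by
      rw [List.Nodup, List.pairwise_map]
      refine List.Pairwise.imp_of_mem ?_ hP.2
      intro a b ha hb hdisj heq
      have h1 : a.head! ∈ a := List.head!_mem_self (hP.1 a ha).1
      have h2 : a.head! ∈ b := heq ▸ List.head!_mem_self (hP.1 b hb).1
      exact hdisj _ h1 h2
    have := hnd.length_le_card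
    simpa using this

lemma andor_step {n : ℕ} (f : (Fin n → Bool) → Fin n → Bool)
    (G : Fin n → Fin n → Prop)
    (handor : ∀ v : Fin n,
      (∀ x : Fin n → Bool, f x v = true ↔ ∀ u, G u v → x u = true) ∨
      (∀ x : Fin n → Bool, f x v = true ↔ ∃ u, G u v ∧ x u = true))
    (x y : Fin n → Bool) (hx : f x = x) (hy : f y = y) (v : Fin n)
    (hvx : x v = true) (hvy : y v = false) :
    (∃ u, G u v ∧ x u = true ∧ y u = false) ∧
      ∀ u, G u v → ¬(y u = true ∧ x u = false) := by
  have hfx : f x v = true := by rw [congrFun hx v]; exact hvx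
  have hfy : f y v ≠ true := by rw [congrFun hy v, hvy]; simp
  rcases handor v with h | h
  · have hall := (h x).mp hfx
    have hny : ¬ ∀ u, G u v → y u = true := fun hh => hfy ((h y).mpr hh)
    push_neg at hny
    obtain ⟨u, hGu, hyu⟩ := hny
    exact ⟨⟨u, hGu, hall u hGu, by simpa using hyu⟩,
      fun u hGu h' => by simp [hall u hGu] at h'⟩
  · obtain ⟨u, hGu, hxu⟩ := (h x).mp hfx
    have hally : ∀ u, G u v → y u = false := by
      intro u hu
      by_contra hc
      exact hfy ((h y).mpr ⟨u, hu, by simpa using hc⟩)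
    exact ⟨⟨u, hGu, hxu, hally u hGu⟩, fun u hu h' => by simp [hally u hu] at h'⟩

end AuxProof

/-- an and-or-network whose interaction graph has no two independent
cycles has at most `ν(G)+1` fixed points. -/
theorem stmt11 {n : ℕ} (f : (Fin n → Bool) → Fin n → Bool)
    (G : Fin n → Fin n → Prop) (hG : ∀ u v, G u v ↔ Depends f u v)
    (handor : ∀ v : Fin n,
      (∀ x : Fin n → Bool, f x v = true ↔ ∀ u, G u v → x u = true) ∨
      (∀ x : Fin n → Bool, f x v = true ↔ ∃ u, G u v ∧ x u = true))
    (hind : ¬ ∃ C₁ C₂ : List (Fin n),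
      IsCycle G C₁ ∧ IsCycle G C₂ ∧ Independent G C₁ C₂) :
    Set.ncard {x : Fin n → Bool | f x = x} ≤ nu G + 1 := by
  classical
  set F : Set (Fin n → Bool) := {x : Fin n → Bool | f x = x} with hF
  have hFfin : F.Finite := Set.toFinite _
  rw [Set.ncard_eq_toFinset_card F hFfin]
  set s := hFfin.toFinset with hs
  have hmem_s : ∀ x, x ∈ s ↔ f x = x := by
    intro x
    rw [hs, Set.Finite.mem_toFinset]
    rfl
  -- any two fixed points are comparable
  have hcomp : ∀ x ∈ s, ∀ y ∈ s, x ≤ y ∨ y ≤ x := by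
    intro x hx y hy
    rw [hmem_s] at hx hy
    by_contra hcon
    push_neg at hcon
    obtain ⟨hnxy, hnyx⟩ := hcon
    have hexA : ∃ v, x v = true ∧ y v = false := by
      rw [Pi.le_def] at hnxy
      push_neg at hnxy
      obtain ⟨v, hv⟩ := hnxy
      obtain ⟨h1, h2⟩ := Bool.lt_iff.mp hv
      exact ⟨v, h2, h1⟩
    have hexB : ∃ v, y v = true ∧ x v = false := by
      rw [Pi.le_def] at hnyx
      push_neg at hnyx
      obtain ⟨v, hv⟩ := hnyx
      obtain ⟨h1, h2⟩ := Bool.lt_iff.mp hv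
      exact ⟨v, h2, h1⟩
    set A := Finset.univ.filter (fun v => x v = true ∧ y v = false) with hA
    set B := Finset.univ.filter (fun v => y v = true ∧ x v = false) with hB
    have hmemA : ∀ v, v ∈ A ↔ (x v = true ∧ y v = false) := by
      intro v; simp [hA]
    have hmemB : ∀ v, v ∈ B ↔ (y v = true ∧ x v = false) := by
      intro v; simp [hB]
    obtain ⟨vA, hvA⟩ := hexA
    obtain ⟨vB, hvB⟩ := hexB
    have hclA : ∀ v ∈ A, ∃ u ∈ A, G u v := by
      intro v hv
      rw [hmemA] at hv
      obtain ⟨u, hGu, hu1, hu2⟩ := (andor_step f G handor x y hx hy v hv.1 hv.2).1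
      exact ⟨u, (hmemA u).mpr ⟨hu1, hu2⟩, hGu⟩
    have hclB : ∀ v ∈ B, ∃ u ∈ B, G u v := by
      intro v hv
      rw [hmemB] at hv
      obtain ⟨u, hGu, hu1, hu2⟩ := (andor_step f G handor y x hy hx v hv.1 hv.2).1
      exact ⟨u, (hmemB u).mpr ⟨hu1, hu2⟩, hGu⟩
    obtain ⟨C₁, hC₁cyc, hC₁A⟩ := exists_cycle G A vA ((hmemA vA).mpr hvA) hclA
    obtain ⟨C₂, hC₂cyc, hC₂B⟩ := exists_cycle G B vB ((hmemB vB).mpr hvB) hclB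
    apply hind
    refine ⟨C₁, C₂, hC₁cyc, hC₂cyc, ?_, ?_⟩
    · intro v hv1 hv2
      have h1 := (hmemA v).mp (hC₁A v hv1)
      have h2 := (hmemB v).mp (hC₂B v hv2)
      rw [h1.1] at h2
      exact absurd h2.2 (by simp)
    · intro u hu v hv
      have huA := (hmemA u).mp (hC₁A u hu)
      have hvB' := (hmemB v).mp (hC₂B v hv)
      constructor
      · intro hGuv
        exact (andor_step f G handor y x hy hx v hvB'.1 hvB'.2).2 u hGuv ⟨huA.1, huA.2⟩
      · intro hGvu
        exact (andor_step f G handor x y hx hy u huA.1 huA.2).2 v hGvu ⟨hvB'.1, hvB'.2⟩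
  -- now count via a chain
  obtain ⟨L, hLp, hLlen, hLmem⟩ := exists_chain_list s.card s rfl hcomp
  rcases hc : s.card with _ | k
  · simp [hc]
  · rw [hc] at hLlen
    have hfix : ∀ z ∈ L, f z = z := by
      intro z hz
      exact (hmem_s z).mp (hLmem z hz)
    have hget := List.pairwise_iff_getElem.mp hLp
    set Z : Fin (k+1) → (Fin n → Bool) := fun i => L[(i : ℕ)]'(by omega) with hZ
    have hZfix : ∀ i, f (Z i) = Z i := fun i => hfix _ (List.getElem_mem (by omega))
    have hZlt : ∀ i j : Fin (k+1), i < j → Z i < Z j := by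
      intro i j hij
      exact hget _ _ (by omega) (by omega) (by exact_mod_cast hij)
    have hZle : ∀ i j : Fin (k+1), i ≤ j → Z i ≤ Z j := by
      intro i j hij
      rcases lt_or_eq_of_le hij with h | h
      · exact le_of_lt (hZlt i j h)
      · rw [h]
    have hcyc : ∀ i : Fin k, ∃ l, IsCycle G l ∧
        ∀ v ∈ l, Z i.castSucc v ≠ Z i.succ v := by
      intro i
      apply cycle_in_diff f G hG _ _ (hZfix _) (hZfix _)
      exact ne_of_lt (hZlt _ _ (by simp [Fin.lt_def]))
    choose C hCcyc hCdiff using hcyc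
    have hpack : IsPacking G (List.ofFn C) := by
      constructor
      · intro l hl
        rw [List.mem_ofFn] at hl
        obtain ⟨i, rfl⟩ := hl
        exact hCcyc i
      · rw [List.pairwise_ofFn]
        intro i j hij v hvi hvj
        have h1 := hCdiff i v hvi
        have h2 := hCdiff j v hvj
        have ha : Z i.castSucc v ≤ Z i.succ v := hZle _ _ (by simp [Fin.le_def]) v
        have hb : Z i.succ v ≤ Z j.castSucc v := by
          refine hZle _ _ ?_ v
          rw [Fin.le_def]
          simp only [Fin.val_succ, Fin.coe_castSucc]
          exact_mod_cast hij
        have hcc : Z j.castSucc v ≤ Z j.succ v := hZle _ _ (by simp [Fin.le_def]) v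
        have key : ∀ a b c d : Bool, a ≠ b → c ≠ d → a ≤ b → b ≤ c → c ≤ d → False := by
          decide
        exact key _ _ _ _ h1 h2 ha hb hcc
    have hk : k ∈ {k | ∃ P : List (List (Fin n)), IsPacking G P ∧ P.length = k} :=
      ⟨List.ofFn C, hpack, by simp⟩
    have hbdd : BddAbove {k | ∃ P : List (List (Fin n)), IsPacking G P ∧ P.length = k} := by
      refine ⟨n, ?_⟩
      rintro m ⟨P, hP, rfl⟩
      exact packing_length_le G P hP
    have hnu : k ≤ nu G := le_csSup hbdd hk
    omega
end

section
/- Let G be a digraph on vertex set {1,…,n} with maximum in-degree at most two and with no two independent cycles. Then every monotone Boolean network with interaction graph G has at most ν(G)+1 fixed points, and there exists a monotone Boolean network with interaction graph G having exactly ν(G)+1 fixed points. -/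
open Classical

section Aux
attribute [local instance] Classical.propDecidable
variable {n : ℕ}

/-- Locality: f x v = f y v if x,y agree on all coordinates f_v depends on. -/
lemma eq_of_agree (f : (Fin n → Bool) → Fin n → Bool) (v : Fin n) :
    ∀ (m : ℕ) (x y : Fin n → Bool), (Finset.univ.filter (fun w => x w ≠ y w)).card = m →
    (∀ u, Depends f u v → x u = y u) → f x v = f y v := by
  intro m
  induction m using Nat.strong_induction_on with
  | _ m ih =>
    intro x y hcard h
    rcases Nat.eq_zero_or_pos m with hm | hm
    · have : x = y := by
        funext w
        by_contra hw
        have hmem : w ∈ Finset.univ.filter (fun w => x w ≠ y w) := by simp [hw]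
        rw [Finset.card_eq_zero.mp (by omega : (Finset.univ.filter (fun w => x w ≠ y w)).card = 0)] at hmem
        simp at hmem
      rw [this]
    · have hne : (Finset.univ.filter (fun w => x w ≠ y w)).Nonempty := by
        rw [← Finset.card_pos, hcard]; omega
      obtain ⟨w, hw⟩ := hne
      simp only [Finset.mem_filter] at hw
      have hdep : ¬ Depends f w v := fun hd => hw.2 (h w hd)
      have hxx' : f x v = f (Function.update x w (y w)) v := by
        by_contra hne'
        exact hdep ⟨x, Function.update x w (y w), fun w' hw' => (Function.update_of_ne hw' _ _).symm, hne'⟩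
      rw [hxx']
      refine ih (m - 1) (by omega) _ _ ?_ ?_
      · have : Finset.univ.filter (fun w' => Function.update x w (y w) w' ≠ y w') =
            (Finset.univ.filter (fun w' => x w' ≠ y w')).erase w := by
          ext w'
          by_cases hww : w' = w <;>
            simp [hww, Function.update_of_ne, Function.update_self, hw.2]
        rw [this, Finset.card_erase_of_mem (by simp [hw.2]), hcard]
      · intro u hu
        by_cases huw : u = w
        · subst huw; simp
        · rw [Function.update_of_ne huw]; exact h u hu

lemma eq_of_agree' (f : (Fin n → Bool) → Fin n → Bool) (v : Fin n) (x y : Fin n → Bool)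
    (h : ∀ u, Depends f u v → x u = y u) : f x v = f y v :=
  eq_of_agree f v _ x y rfl h

lemma le_of_agree_le (f : (Fin n → Bool) → Fin n → Bool) (hf : Monotone f) (v : Fin n)
    (x y : Fin n → Bool) (h : ∀ u, Depends f u v → x u ≤ y u) : f x v ≤ f y v := by
  set z : Fin n → Bool := fun w => x w || y w with hz
  have hxz : x ≤ z := fun w => by cases hxw : x w <;> simp [hz, hxw]
  have h1 : f x v ≤ f z v := hf hxz v
  have h2 : f z v = f y v := by
    apply eq_of_agree' f v
    intro u hu
    have := h u hu
    cases hxu : x u <;> cases hyu : y u <;> simp [hz, hxu, hyu] <;> (rw [hxu, hyu] at this; exact absurd this (by decide))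
  rw [h2] at h1; exact h1
end Aux
section Aux2
variable {V : Type*}

lemma length_LL {l : List V} (hl : l ≠ []) : (l ++ l.take 1).length = l.length + 1 := by
  have : l.length ≠ 0 := fun h => hl (List.eq_nil_of_length_eq_zero h)
  simp [List.length_take]; omega

lemma cycArcs_mem_iff {l : List V} {a : V × V} :
    a ∈ CycArcs l ↔ ∃ i : ℕ, ∃ h : i + 1 < (l ++ l.take 1).length,
      a = ((l ++ l.take 1)[i], (l ++ l.take 1)[i+1]) := by
  unfold CycArcs
  rw [List.mem_iff_getElem]
  constructor
  · rintro ⟨i, hi, rfl⟩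
    rw [List.length_zip, List.length_tail] at hi
    refine ⟨i, by omega, ?_⟩
    rw [List.getElem_zip, List.getElem_tail]
  · rintro ⟨i, hi, rfl⟩
    refine ⟨i, ?_, ?_⟩
    · rw [List.length_zip, List.length_tail]; omega
    · rw [List.getElem_zip, List.getElem_tail]

lemma cycArcs_forall {l : List V} (hl : l ≠ []) {R : V → V → Prop}
    (hcons : ∀ i : ℕ, (h : i + 1 < l.length) → R l[i] l[i+1])
    (hlast : R (l.getLast hl) (l.head hl)) : ∀ a ∈ CycArcs l, R a.1 a.2 := by
  intro a ha
  obtain ⟨i, hi, rfl⟩ := cycArcs_mem_iff.mp ha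
  rw [length_LL hl] at hi
  have h1 : (l ++ l.take 1)[i] = l[i]'(by omega) := List.getElem_append_left (by omega)
  rcases Nat.lt_or_ge (i+1) l.length with h2 | h2
  · have h3 : (l ++ l.take 1)[i+1] = l[i+1]'h2 := List.getElem_append_left h2
    simp only [h1, h3]
    exact hcons i h2
  · have hieq : i + 1 = l.length := by omega
    have h3 : (l ++ l.take 1)[i+1] = (l.take 1)[i+1-l.length]'(by simp [List.length_take]; omega) :=
      List.getElem_append_right (by omega)
    have h4 : (l.take 1)[i+1-l.length]'(by simp [List.length_take]; omega) = l[0]'(by omega) := by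
      have : i + 1 - l.length = 0 := by omega
      simp [this, List.getElem_take]
    have h5 : l.getLast hl = l[i]'(by omega) := by
      rw [List.getLast_eq_getElem]; congr 1; omega
    have h6 : l.head hl = l[0]'(by omega) := l.head_eq_getElem hl
    simp only [h1, h3, h4]
    rw [h5, h6] at hlast
    exact hlast

lemma mem_cycArcs_of_cons {l : List V} (i : ℕ) (h : i + 1 < l.length) :
    (l[i], l[i+1]) ∈ CycArcs l := by
  have hl : l ≠ [] := by intro h'; subst h'; simp at h
  rw [cycArcs_mem_iff]
  refine ⟨i, by rw [length_LL hl]; omega, ?_⟩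
  rw [List.getElem_append_left (by omega), List.getElem_append_left h]

lemma mem_cycArcs_last {l : List V} (hl : l ≠ []) :
    (l.getLast hl, l.head hl) ∈ CycArcs l := by
  have hlen : 0 < l.length := List.length_pos_iff.mpr hl
  rw [cycArcs_mem_iff]
  refine ⟨l.length - 1, by rw [length_LL hl]; omega, ?_⟩
  have h1 : (l ++ l.take 1)[l.length - 1]'(by rw [length_LL hl]; omega) = l[l.length-1]'(by omega) :=
    List.getElem_append_left (by omega)
  have h2 : (l ++ l.take 1)[l.length - 1 + 1]'(by rw [length_LL hl]; omega)
      = (l.take 1)[l.length - 1 + 1 - l.length]'(by simp [List.length_take]; omega) :=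
    List.getElem_append_right (by omega)
  rw [h1, h2]
  have h3 : l.length - 1 + 1 - l.length = 0 := by omega
  rw [List.getLast_eq_getElem, l.head_eq_getElem hl]
  congr 1
  simp [h3, List.getElem_take]

/-- every vertex of a cycle has a predecessor on the cycle -/
lemma exists_pred {G : V → V → Prop} {l : List V} (hc : IsCycle G l) {v : V} (hv : v ∈ l) :
    ∃ p ∈ l, G p v := by
  obtain ⟨hl, _, harc⟩ := hc
  obtain ⟨i, hi, rfl⟩ := List.mem_iff_getElem.mp hv
  rcases Nat.eq_zero_or_pos i with rfl | hpos
  · refine ⟨l.getLast hl, List.getLast_mem hl, ?_⟩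
    have := harc _ (mem_cycArcs_last hl)
    rwa [l.head_eq_getElem hl] at this
  · refine ⟨l[i-1], List.getElem_mem _, ?_⟩
    have := harc _ (mem_cycArcs_of_cons (i-1) (by omega))
    have he : i - 1 + 1 = i := by omega
    simp only [he] at this
    exact this
end Aux2
section Aux3
variable {n : ℕ}

lemma exists_cycle_of_seq {R : Fin n → Fin n → Prop} (u : ℕ → Fin n)
    (hu : ∀ t, R (u (t+1)) (u t)) :
    ∃ l : List (Fin n), IsCycle R l ∧ ∀ v ∈ l, ∃ s, u s = v := by
  have hQ : ∃ j, ∃ i, i < j ∧ u i = u j := by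
    obtain ⟨i0, j0, hne, heq⟩ := Finite.exists_ne_map_eq_of_infinite u
    rcases Nat.lt_or_ge i0 j0 with h | h
    · exact ⟨j0, i0, h, heq⟩
    · exact ⟨i0, j0, by omega, heq.symm⟩
  obtain ⟨i, hij, hui⟩ := Nat.find_spec hQ
  set j := Nat.find hQ with hjdef
  have hinj : ∀ s t, s < t → t < j → u s ≠ u t := fun s t hst htj hne' =>
    Nat.find_min hQ htj ⟨s, hst, hne'⟩
  set m := j - i with hmdef
  have hm : 1 ≤ m := by omega
  set l : List (Fin n) := (List.range m).map (fun s => u (j - 1 - s)) with hldef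
  have hlen : l.length = m := by simp [hldef]
  have hget : ∀ (s : ℕ) (h : s < m), l[s]'(by omega) = u (j - 1 - s) := by
    intro s h
    simp [hldef]
  have hne : l ≠ [] := by
    intro h
    rw [h] at hlen; simp at hlen; omega
  refine ⟨l, ⟨hne, ?_, ?_⟩, ?_⟩
  · refine List.Nodup.map_on ?_ (List.nodup_range (n := m))
    intro s hs t ht heq
    simp only [List.mem_range] at hs ht
    by_contra hst
    rcases Nat.lt_or_ge s t with h | h
    · exact hinj (j-1-t) (j-1-s) (by omega) (by omega) heq.symm
    · exact hinj (j-1-s) (j-1-t) (by omega) (by omega) heq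
  · refine cycArcs_forall hne ?_ ?_
    · intro s hs
      rw [hlen] at hs
      rw [hget s (by omega), hget (s+1) (by omega)]
      have h1 : j - 1 - s = (j - 1 - (s+1)) + 1 := by omega
      rw [h1]
      exact hu _
    · rw [List.getLast_eq_getElem, l.head_eq_getElem hne]
      have h0 : (0:ℕ) < m := by omega
      have e1 : l.length - 1 = m - 1 := by omega
      simp only [e1]
      rw [hget (m-1) (by omega), hget 0 (by omega)]
      have h1 : j - 1 - (m - 1) = i := by omega
      have h2 : j = (j - 1 - 0) + 1 := by omega
      rw [h1, hui, h2]
      exact hu _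
  · intro v hv
    simp only [hldef, List.mem_map] at hv
    obtain ⟨s, _, hs⟩ := hv
    exact ⟨_, hs⟩

lemma length_le_join_length {V : Type*} : ∀ (P : List (List V)), (∀ l ∈ P, l ≠ []) →
    P.length ≤ P.flatten.length := by
  intro P
  induction P with
  | nil => simp
  | cons h t ih =>
    intro hne
    simp only [List.flatten_cons, List.length_append, List.length_cons]
    have h1 : 1 ≤ h.length := List.length_pos_iff.mpr (hne h (by simp))
    have h2 := ih (fun l hl => hne l (by simp [hl]))
    omega

lemma packing_card_le {G : Fin n → Fin n → Prop} {P : List (List (Fin n))}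
    (hP : IsPacking G P) : P.length ≤ n := by
  have hjoin : P.flatten.Nodup := by
    rw [List.nodup_flatten]
    exact ⟨fun l hl => (hP.1 l hl).2.1, hP.2⟩
  have h1 : P.length ≤ P.flatten.length :=
    length_le_join_length P (fun l hl => (hP.1 l hl).1)
  have h2 : P.flatten.length ≤ Fintype.card (Fin n) := hjoin.length_le_card
  simpa using h1.trans h2

lemma nu_set_nonempty (G : Fin n → Fin n → Prop) :
    Set.Nonempty {k | ∃ P : List (List (Fin n)), IsPacking G P ∧ P.length = k} :=
  ⟨0, [], ⟨by simp, List.Pairwise.nil⟩, rfl⟩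

lemma nu_set_bdd (G : Fin n → Fin n → Prop) :
    BddAbove {k | ∃ P : List (List (Fin n)), IsPacking G P ∧ P.length = k} :=
  ⟨n, fun k ⟨P, hP, hl⟩ => hl ▸ packing_card_le hP⟩

lemma le_nu {G : Fin n → Fin n → Prop} {P : List (List (Fin n))} (hP : IsPacking G P) :
    P.length ≤ nu G :=
  le_csSup (nu_set_bdd G) ⟨P, hP, rfl⟩

lemma nu_attained (G : Fin n → Fin n → Prop) :
    ∃ P : List (List (Fin n)), IsPacking G P ∧ P.length = nu G := by
  have := Nat.sSup_mem (nu_set_nonempty G) (nu_set_bdd G)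
  exact this

lemma packing_snoc {V : Type*} {G : V → V → Prop} {P : List (List V)} (hP : IsPacking G P)
    {l : List V} (hl : IsCycle G l) (hdisj : ∀ C ∈ P, ∀ v ∈ C, v ∉ l) :
    IsPacking G (P ++ [l]) := by
  constructor
  · intro C hC
    rcases List.mem_append.mp hC with h | h
    · exact hP.1 C h
    · simp at h; subst h; exact hl
  · rw [List.pairwise_append]
    refine ⟨hP.2, by simp, ?_⟩
    intro a ha b hb
    simp only [List.mem_singleton] at hb
    subst hb
    exact hdisj a ha
end Aux3
section Aux4
attribute [local instance] Classical.propDecidable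
variable {n : ℕ} {G : Fin n → Fin n → Prop} {f : (Fin n → Bool) → Fin n → Bool}

lemma pred_in_diff (hG : ∀ u v, G u v ↔ Depends f u v) {x y : Fin n → Bool}
    (hx : f x = x) (hy : f y = y) {v : Fin n} (hv : x v ≠ y v) :
    ∃ u, G u v ∧ x u ≠ y u := by
  by_contra h
  push_neg at h
  have heq : f x v = f y v :=
    eq_of_agree' f v x y (fun u hu => h u ((hG u v).mpr hu))
  rw [congrFun hx v, congrFun hy v] at heq
  exact hv heq

lemma pred_in_A (hf : Monotone f) (hG : ∀ u v, G u v ↔ Depends f u v) {x y : Fin n → Bool}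
    (hx : f x = x) (hy : f y = y) {v : Fin n} (hxv : x v = true) (hyv : y v = false) :
    ∃ u, G u v ∧ x u = true ∧ y u = false := by
  by_contra h
  push_neg at h
  have hle : ∀ u, Depends f u v → x u ≤ y u := by
    intro u hu
    have hGu := (hG u v).mpr hu
    cases hxu : x u
    · exact Bool.false_le _
    · have := h u hGu hxu
      cases hyu : y u
      · exact absurd hyu this
      · exact le_refl _
  have hle2 := le_of_agree_le f hf v x y hle
  rw [congrFun hx v, congrFun hy v, hxv, hyv] at hle2
  exact absurd hle2 (by decide)

lemma no_arc (hdeg : ∀ v : Fin n, Set.ncard {u : Fin n | G u v} ≤ 2)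
    (hG : ∀ u v, G u v ↔ Depends f u v) (hf : Monotone f)
    {x y : Fin n → Bool} (hx : f x = x) (hy : f y = y) {a b : Fin n}
    (hxa : x a = true) (hya : y a = false)
    (hxb : x b = false) (hyb : y b = true) (hab : G a b) : False := by
  obtain ⟨b', hGb', hyb', hxb'⟩ := pred_in_A hf hG hy hx hyb hxb
  have hab' : a ≠ b' := by
    intro h
    rw [← h, hxa] at hxb'
    exact Bool.noConfusion hxb'
  have honly : ∀ c, G c b → c = a ∨ c = b' := by
    intro c hc
    by_contra hcc
    push_neg at hcc
    have hsub : (↑({a, b', c} : Finset (Fin n)) : Set (Fin n)) ⊆ {u : Fin n | G u b} := by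
      intro w hw
      simp only [Finset.coe_insert, Set.mem_insert_iff, Finset.coe_singleton,
        Set.mem_singleton_iff] at hw
      rcases hw with rfl | rfl | rfl
      · exact hab
      · exact hGb'
      · exact hc
    have h3 : ({a, b', c} : Finset (Fin n)).card = 3 := by
      rw [Finset.card_eq_three]
      exact ⟨a, b', c, hab', Ne.symm hcc.1, Ne.symm hcc.2, rfl⟩
    have hle := Set.ncard_le_ncard hsub (Set.toFinite _)
    rw [Set.ncard_coe_finset, h3] at hle
    have := hdeg b
    omega
  set g : Bool → Bool → Bool :=
    fun α β => f (fun w => if w = b' then β else if w = a then α else false) b with hg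
  have hgeq : ∀ z : Fin n → Bool, f z b = g (z a) (z b') := by
    intro z
    apply eq_of_agree' f b
    intro u hu
    rcases honly u ((hG u b).mpr hu) with rfl | rfl
    · simp [hab']
    · simp
  have hmono : ∀ α α' β β', α ≤ α' → β ≤ β' → g α β ≤ g α' β' := by
    intro α α' β β' h1 h2
    apply hf
    intro w
    by_cases hwb : w = b'
    · simp [hwb, h2]
    · by_cases hwa : w = a <;> simp [hwb, hwa, hab', h1]
  have h10 : g true false = false := by
    have h := hgeq x
    rw [congrFun hx b, hxa, hxb', hxb] at h
    exact h.symm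
  have h01 : g false true = true := by
    have h := hgeq y
    rw [congrFun hy b, hya, hyb', hyb] at h
    exact h.symm
  have hgval : ∀ α β, g α β = β := by
    intro α β
    cases β
    · have h := hmono α true false false (Bool.le_true α) (le_refl _)
      rw [h10] at h
      exact le_antisymm h (Bool.false_le _)
    · have h := hmono false α true true (Bool.false_le α) (le_refl _)
      rw [h01] at h
      exact le_antisymm (Bool.le_true _) h
  obtain ⟨x₁, x₂, hagree, hne⟩ := (hG a b).mp hab
  apply hne
  rw [hgeq x₁, hgeq x₂, hgval, hgval]
  exact hagree b' (fun h => hab' h.symm)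

lemma comparable (hdeg : ∀ v : Fin n, Set.ncard {u : Fin n | G u v} ≤ 2)
    (hind : ¬ ∃ C₁ C₂ : List (Fin n), IsCycle G C₁ ∧ IsCycle G C₂ ∧ Independent G C₁ C₂)
    (hf : Monotone f) (hG : ∀ u v, G u v ↔ Depends f u v) {x y : Fin n → Bool}
    (hx : f x = x) (hy : f y = y) : x ≤ y ∨ y ≤ x := by
  by_contra h
  push_neg at h
  obtain ⟨hnxy, hnyx⟩ := h
  have hA : ∃ a, x a = true ∧ y a = false := by
    rw [Pi.le_def, not_forall] at hnxy
    obtain ⟨a, ha⟩ := hnxy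
    refine ⟨a, ?_⟩
    cases hxa : x a <;> cases hya : y a <;> simp [hxa, hya] at ha ⊢
  have hB : ∃ b, y b = true ∧ x b = false := by
    rw [Pi.le_def, not_forall] at hnyx
    obtain ⟨b, hb⟩ := hnyx
    refine ⟨b, ?_⟩
    cases hxb : x b <;> cases hyb : y b <;> simp [hxb, hyb] at hb ⊢
  obtain ⟨a, ha⟩ := hA
  obtain ⟨b, hb⟩ := hB
  have hApred : ∀ v : {v : Fin n // x v = true ∧ y v = false},
      ∃ u, (x u = true ∧ y u = false) ∧ G u v.1 := by
    rintro ⟨v, hv1, hv2⟩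
    obtain ⟨u, hu1, hu2, hu3⟩ := pred_in_A hf hG hx hy hv1 hv2
    exact ⟨u, ⟨hu2, hu3⟩, hu1⟩
  have hBpred : ∀ v : {v : Fin n // y v = true ∧ x v = false},
      ∃ u, (y u = true ∧ x u = false) ∧ G u v.1 := by
    rintro ⟨v, hv1, hv2⟩
    obtain ⟨u, hu1, hu2, hu3⟩ := pred_in_A hf hG hy hx hv1 hv2
    exact ⟨u, ⟨hu2, hu3⟩, hu1⟩
  let uA : ℕ → {v : Fin n // x v = true ∧ y v = false} := fun t =>
    Nat.rec ⟨a, ha⟩ (fun _ p => ⟨(hApred p).choose, ((hApred p).choose_spec).1⟩) t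
  have huA : ∀ t, G (uA (t+1)).1 (uA t).1 := fun t => ((hApred (uA t)).choose_spec).2
  let uB : ℕ → {v : Fin n // y v = true ∧ x v = false} := fun t =>
    Nat.rec ⟨b, hb⟩ (fun _ p => ⟨(hBpred p).choose, ((hBpred p).choose_spec).1⟩) t
  have huB : ∀ t, G (uB (t+1)).1 (uB t).1 := fun t => ((hBpred (uB t)).choose_spec).2
  obtain ⟨CA, hCA, hCAmem⟩ := exists_cycle_of_seq (fun t => (uA t).1) huA
  obtain ⟨CB, hCB, hCBmem⟩ := exists_cycle_of_seq (fun t => (uB t).1) huB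
  have hCAsub : ∀ v ∈ CA, x v = true ∧ y v = false := by
    intro v hv
    obtain ⟨s, hs⟩ := hCAmem v hv
    rw [← hs]
    exact (uA s).2
  have hCBsub : ∀ v ∈ CB, y v = true ∧ x v = false := by
    intro v hv
    obtain ⟨s, hs⟩ := hCBmem v hv
    rw [← hs]
    exact (uB s).2
  refine hind ⟨CA, CB, hCA, hCB, ?_, ?_⟩
  · intro v hv hv'
    have h1 := (hCAsub v hv).1
    have h2 := (hCBsub v hv').2
    rw [h1] at h2
    exact Bool.noConfusion h2
  · intro u hu v hv
    obtain ⟨hu1, hu2⟩ := hCAsub u hu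
    obtain ⟨hv1, hv2⟩ := hCBsub v hv
    constructor
    · exact fun harc => no_arc hdeg hG hf hx hy hu1 hu2 hv2 hv1 harc
    · exact fun harc => no_arc hdeg hG hf hy hx hv1 hv2 hu2 hu1 harc
end Aux4
section Aux5
attribute [local instance] Classical.propDecidable
variable {n : ℕ} {G : Fin n → Fin n → Prop} {f : (Fin n → Bool) → Fin n → Bool}

lemma chain_packing (hG : ∀ u v, G u v ↔ Depends f u v) :
    ∀ (m : ℕ) (S : Finset (Fin n → Bool)), S.card = m → S.Nonempty →
    (∀ x ∈ S, f x = x) → (∀ x ∈ S, ∀ y ∈ S, x ≤ y ∨ y ≤ x) →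
    ∃ y ∈ S, (∀ x ∈ S, x ≤ y) ∧ ∃ Pk : List (List (Fin n)), IsPacking G Pk ∧
      Pk.length + 1 = S.card ∧ ∀ C ∈ Pk, ∀ v ∈ C, y v = true := by
  intro m
  induction m with
  | zero =>
    intro S hc hne _ _
    exact absurd (Finset.card_pos.mpr hne) (by omega)
  | succ m ih =>
    intro S hc hne hfix hcomp
    obtain ⟨y, hyS, hymax'⟩ := S.exists_maximal hne
    have hymax : ∀ x ∈ S, x ≤ y := by
      intro x hxS
      rcases hcomp x hxS y hyS with h | h
      · exact h
      · by_cases hxy : y = x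
        · exact le_of_eq hxy.symm
        · exact hymax' hxS h
    rcases Nat.eq_zero_or_pos m with hm | hm
    · exact ⟨y, hyS, hymax, [], ⟨by simp, List.Pairwise.nil⟩, by simp [hc, hm], by simp⟩
    · have hne' : (S.erase y).Nonempty := by
        rw [← Finset.card_pos, Finset.card_erase_of_mem hyS, hc]; omega
      have hCE : (S.erase y).card = m := by rw [Finset.card_erase_of_mem hyS, hc]; omega
      obtain ⟨y', hy'S, _, P', hP', hP'len, hP'vert⟩ :=
        ih (S.erase y) hCE hne' (fun x hx => hfix x (Finset.mem_of_mem_erase hx))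
          (fun x hx z hz => hcomp x (Finset.mem_of_mem_erase hx) z (Finset.mem_of_mem_erase hz))
      have hy'ne : y' ≠ y := Finset.ne_of_mem_erase hy'S
      have hy'S' : y' ∈ S := Finset.mem_of_mem_erase hy'S
      have hy'le : y' ≤ y := hymax y' hy'S'
      have hDne : ∃ v, y' v = false ∧ y v = true := by
        by_contra hD
        push_neg at hD
        apply hy'ne
        funext v
        have hle := hy'le v
        cases h1 : y' v
        · have h2 := hD v h1
          cases h3 : y v
          · rfl
          · exact absurd h3 h2
        · rw [h1] at hle
          cases h3 : y v
          · rw [h3] at hle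
            exact le_antisymm hle (Bool.false_le true)
          · rfl
      obtain ⟨v₀, hv₀⟩ := hDne
      have hfy : f y = y := hfix y hyS
      have hfy' : f y' = y' := hfix y' hy'S'
      have hpred : ∀ v : {v : Fin n // y' v = false ∧ y v = true},
          ∃ u, (y' u = false ∧ y u = true) ∧ G u v.1 := by
        rintro ⟨v, hv1, hv2⟩
        obtain ⟨u, hu1, hu2⟩ := pred_in_diff hG hfy' hfy (v := v)
          (by rw [hv1, hv2]; exact Bool.noConfusion)
        have hle := hy'le u
        refine ⟨u, ⟨?_, ?_⟩, hu1⟩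
        · cases h1 : y' u
          · rfl
          · rw [h1] at hle hu2
            cases h3 : y u
            · rw [h3] at hle; exact le_antisymm hle (Bool.false_le true)
            · rw [h3] at hu2; exact absurd rfl hu2
        · cases h3 : y u
          · rw [h3] at hle hu2
            cases h1 : y' u
            · rw [h1] at hu2; exact absurd rfl hu2
            · rw [h1] at hle; exact (le_antisymm hle (Bool.false_le true)).symm
          · rfl
      let uD : ℕ → {v : Fin n // y' v = false ∧ y v = true} := fun t =>
        Nat.rec ⟨v₀, hv₀⟩ (fun _ p => ⟨(hpred p).choose, ((hpred p).choose_spec).1⟩) t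
      have huD : ∀ t, G (uD (t+1)).1 (uD t).1 := fun t => ((hpred (uD t)).choose_spec).2
      obtain ⟨K, hK, hKmem⟩ := exists_cycle_of_seq (fun t => (uD t).1) huD
      have hKsub : ∀ v ∈ K, y' v = false ∧ y v = true := by
        intro v hv
        obtain ⟨s, hs⟩ := hKmem v hv
        rw [← hs]
        exact (uD s).2
      refine ⟨y, hyS, hymax, P' ++ [K], packing_snoc hP' hK ?_, ?_, ?_⟩
      · intro C hC v hv hvK
        have h1 := hP'vert C hC v hv
        have h2 := (hKsub v hvK).1
        rw [h1] at h2
        exact Bool.noConfusion h2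
      · rw [List.length_append, List.length_singleton, hc]
        rw [hCE] at hP'len
        omega
      · intro C hC v hv
        rcases List.mem_append.mp hC with h | h
        · have h1 := hP'vert C h v hv
          have hle := hy'le v
          rw [h1] at hle
          cases h3 : y v
          · rw [h3] at hle; exact (le_antisymm hle (Bool.false_le true)).symm
          · rfl
        · rw [List.mem_singleton] at h
          subst h
          exact (hKsub v hv).2

lemma upper_bound (hdeg : ∀ v : Fin n, Set.ncard {u : Fin n | G u v} ≤ 2)
    (hind : ¬ ∃ C₁ C₂ : List (Fin n), IsCycle G C₁ ∧ IsCycle G C₂ ∧ Independent G C₁ C₂)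
    (hf : Monotone f) (hG : ∀ u v, G u v ↔ Depends f u v) :
    Set.ncard {x : Fin n → Bool | f x = x} ≤ nu G + 1 := by
  have hfin : {x : Fin n → Bool | f x = x}.Finite := Set.toFinite _
  rw [Set.ncard_eq_toFinset_card' ]
  set S := {x : Fin n → Bool | f x = x}.toFinset with hSdef
  have hmem : ∀ x, x ∈ S ↔ f x = x := by
    intro x
    rw [hSdef, Set.mem_toFinset]
    rfl
  rcases S.eq_empty_or_nonempty with h | h
  · rw [h]; simp
  · obtain ⟨y, _, _, Pk, hPk, hPklen, _⟩ :=
      chain_packing hG S.card S rfl h (fun x hx => (hmem x).mp hx)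
        (fun x hx z hz => comparable hdeg hind hf hG ((hmem x).mp hx) ((hmem z).mp hz))
    have := le_nu hPk
    omega
end Aux5
section Aux6
attribute [local instance] Classical.propDecidable
variable {n : ℕ}

noncomputable def Nbr (G : Fin n → Fin n → Prop) (v : Fin n) : Finset (Fin n) :=
  (Set.toFinite {u : Fin n | G u v}).toFinset

lemma mem_Nbr {G : Fin n → Fin n → Prop} {u v : Fin n} : u ∈ Nbr G v ↔ G u v := by
  rw [Nbr, Set.Finite.mem_toFinset]
  rfl

def cyc (P : List (List (Fin n))) (v : Fin n) : Prop := ∃ j : Fin P.length, v ∈ P.get j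

def rel (G : Fin n → Fin n → Prop) (P : List (List (Fin n))) (u v : Fin n) : Prop :=
  ¬ cyc P u ∧ ¬ cyc P v ∧ G u v

noncomputable def tfun (G : Fin n → Fin n → Prop) (P : List (List (Fin n)))
    (hwf : WellFounded (rel G P)) (K : ℕ) : Fin n → ℕ :=
  hwf.fix (fun v rec =>
    if hv : cyc P v then (Classical.choose hv).val + 1
    else if hN : (Nbr G v).Nonempty then
      (Nbr G v).attach.sup (fun u =>
        if hu : cyc P u.1 then (Classical.choose hu).val + 1
        else rec u.1 ⟨hu, hv, mem_Nbr.mp u.2⟩)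
    else K)

variable {G : Fin n → Fin n → Prop} {P : List (List (Fin n))}

lemma tfun_cyc (hwf : WellFounded (rel G P)) (K : ℕ) {v : Fin n} (hv : cyc P v) :
    tfun G P hwf K v = (Classical.choose hv).val + 1 := by
  show hwf.fix _ v = _
  rw [WellFounded.fix_eq]
  exact dif_pos hv

lemma tfun_get (hP : IsPacking G P) (hwf : WellFounded (rel G P)) (K : ℕ) {v : Fin n}
    {j : Fin P.length} (hj : v ∈ P.get j) :
    tfun G P hwf K v = j.val + 1 := by
  have hv : cyc P v := ⟨j, hj⟩
  rw [tfun_cyc hwf K hv]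
  have hj' := Classical.choose_spec hv
  have heq : Classical.choose hv = j := by
    have hpg := List.pairwise_iff_get.mp hP.2
    rcases lt_trichotomy (Classical.choose hv) j with h | h | h
    · exact absurd hj (hpg _ _ h v hj')
    · exact h
    · exact absurd hj' (hpg _ _ h v hj)
  rw [heq]

lemma tfun_src (hwf : WellFounded (rel G P)) (K : ℕ) {v : Fin n} (hv : ¬ cyc P v)
    (hN : ¬ (Nbr G v).Nonempty) : tfun G P hwf K v = K := by
  show hwf.fix _ v = _
  rw [WellFounded.fix_eq, dif_neg hv, dif_neg hN]

lemma tfun_sup (hwf : WellFounded (rel G P)) (K : ℕ) {v : Fin n} (hv : ¬ cyc P v)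
    (hN : (Nbr G v).Nonempty) :
    tfun G P hwf K v = (Nbr G v).sup (tfun G P hwf K) := by
  conv_lhs => rw [tfun, WellFounded.fix_eq]
  rw [dif_neg hv, dif_pos hN]
  conv_rhs => rw [← Finset.sup_attach (Nbr G v) (tfun G P hwf K)]
  apply Finset.sup_congr rfl
  intro u _
  by_cases hu : cyc P u.1
  · rw [dif_pos hu, tfun_cyc hwf K hu]
  · rw [dif_neg hu]
    rfl

noncomputable def fEx (G : Fin n → Fin n → Prop) (t : Fin n → ℕ) :
    (Fin n → Bool) → Fin n → Bool :=
  fun x v =>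
    if (Nbr G v).Nonempty then
      (if ∀ u ∈ Nbr G v, t u ≤ t v then decide (∀ u ∈ Nbr G v, x u = true)
       else decide (∃ u ∈ Nbr G v, x u = true))
    else false

lemma bool_le_of_imp {a b : Bool} (h : a = true → b = true) : a ≤ b := by
  cases a
  · exact Bool.false_le b
  · rw [h rfl]

lemma bool_eq_true_of_le {a b : Bool} (h : a ≤ b) (ha : a = true) : b = true := by
  subst ha
  exact le_antisymm (Bool.le_true b) h

lemma fEx_monotone (t : Fin n → ℕ) : Monotone (fEx G t) := by
  intro x y hxy v
  apply bool_le_of_imp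
  intro hx
  rw [fEx] at hx ⊢
  by_cases hN : (Nbr G v).Nonempty
  · rw [if_pos hN] at hx ⊢
    by_cases hA : ∀ u ∈ Nbr G v, t u ≤ t v
    · rw [if_pos hA] at hx ⊢
      rw [decide_eq_true_eq] at hx
      rw [decide_eq_true_eq]
      exact fun u hu => bool_eq_true_of_le (hxy u) (hx u hu)
    · rw [if_neg hA] at hx ⊢
      rw [decide_eq_true_eq] at hx
      rw [decide_eq_true_eq]
      obtain ⟨u, hu, hxu⟩ := hx
      exact ⟨u, hu, bool_eq_true_of_le (hxy u) hxu⟩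
  · rw [if_neg hN] at hx
    exact Bool.noConfusion hx

lemma fEx_graph (t : Fin n → ℕ) : ∀ u v, G u v ↔ Depends (fEx G t) u v := by
  intro u v
  constructor
  · intro huv
    have huN : u ∈ Nbr G v := mem_Nbr.mpr huv
    have hN : (Nbr G v).Nonempty := ⟨u, huN⟩
    by_cases hA : ∀ w ∈ Nbr G v, t w ≤ t v
    · refine ⟨(fun w => if w = u then false else true), (fun _ => true),
        fun w hw => by simp [hw], ?_⟩
      rw [fEx, fEx, if_pos hN, if_pos hN, if_pos hA, if_pos hA]
      have h1 : decide (∀ w ∈ Nbr G v, (if w = u then false else true) = true) = false :=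
        decide_eq_false (fun h => by simpa using h u huN)
      have h2 : decide (∀ w ∈ Nbr G v, (true : Bool) = true) = true :=
        decide_eq_true (fun w _ => rfl)
      rw [h1, h2]
      exact Bool.noConfusion
    · refine ⟨(fun _ => false), (fun w => if w = u then true else false),
        fun w hw => by simp [hw], ?_⟩
      rw [fEx, fEx, if_pos hN, if_pos hN, if_neg hA, if_neg hA]
      have h1 : decide (∃ w ∈ Nbr G v, (false : Bool) = true) = false :=
        decide_eq_false (fun ⟨w, _, hw⟩ => Bool.noConfusion hw)
      have h2 : decide (∃ w ∈ Nbr G v, (if w = u then true else false) = true) = true :=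
        decide_eq_true ⟨u, huN, by simp⟩
      rw [h1, h2]
      exact Bool.noConfusion
  · intro hdep
    by_contra huv
    obtain ⟨x, y, hagree, hne⟩ := hdep
    apply hne
    have hxy : ∀ w ∈ Nbr G v, x w = y w := by
      intro w hw
      refine hagree w (fun h => huv ?_)
      rw [← h]
      exact mem_Nbr.mp hw
    rw [fEx, fEx]
    by_cases hN : (Nbr G v).Nonempty
    · rw [if_pos hN, if_pos hN]
      by_cases hA : ∀ w ∈ Nbr G v, t w ≤ t v
      · rw [if_pos hA, if_pos hA]
        rw [decide_eq_decide]
        constructor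
        · intro h w hw
          rw [← hxy w hw]
          exact h w hw
        · intro h w hw
          rw [hxy w hw]
          exact h w hw
      · rw [if_neg hA, if_neg hA]
        rw [decide_eq_decide]
        constructor
        · rintro ⟨w, hw, h⟩
          exact ⟨w, hw, by rw [← hxy w hw]; exact h⟩
        · rintro ⟨w, hw, h⟩
          exact ⟨w, hw, by rw [hxy w hw]; exact h⟩
    · rw [if_neg hN, if_neg hN]

noncomputable def Xi (t : Fin n → ℕ) (i : ℕ) : Fin n → Bool := fun v => decide (t v ≤ i)

lemma rel_wf (hP : IsPacking G P) (hPlen : P.length = nu G) : WellFounded (rel G P) := by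
  by_contra hnwf
  have hx : ∃ x, ¬ Acc (rel G P) x := by
    by_contra hall
    push_neg at hall
    exact hnwf ⟨hall⟩
  obtain ⟨x₀, hx₀⟩ := hx
  have hstep : ∀ p : {a : Fin n // ¬ Acc (rel G P) a}, ∃ b, ¬ Acc (rel G P) b ∧ rel G P b p.1 :=
    fun p => exists_not_acc_lt_of_not_acc p.2
  let u : ℕ → {a : Fin n // ¬ Acc (rel G P) a} := fun s =>
    Nat.rec ⟨x₀, hx₀⟩ (fun _ p => ⟨(hstep p).choose, ((hstep p).choose_spec).1⟩) s
  have hseq : ∀ s, rel G P (u (s+1)).1 (u s).1 := fun s => ((hstep (u s)).choose_spec).2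
  obtain ⟨l, hl, hlmem⟩ := exists_cycle_of_seq (fun s => (u s).1) hseq
  have hlG : IsCycle G l := ⟨hl.1, hl.2.1, fun a ha => (hl.2.2 a ha).2.2⟩
  have hlnc : ∀ v ∈ l, ¬ cyc P v := by
    intro v hv
    obtain ⟨s, hs⟩ := hlmem v hv
    rw [← hs]
    exact (hseq s).2.1
  have hdisj : ∀ C ∈ P, ∀ v ∈ C, v ∉ l := by
    intro C hC v hvC hvl
    obtain ⟨j, hgj⟩ := List.mem_iff_get.mp hC
    exact hlnc v hvl ⟨j, by rw [hgj]; exact hvC⟩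
  have hext := packing_snoc hP hlG hdisj
  have hle := le_nu hext
  rw [List.length_append, List.length_singleton, hPlen] at hle
  omega

lemma fEx_fixed (hdeg : ∀ v : Fin n, Set.ncard {u : Fin n | G u v} ≤ 2)
    (hP : IsPacking G P) (hwf : WellFounded (rel G P)) (K : ℕ)
    (i : ℕ) (hiK : i < K) :
    fEx G (tfun G P hwf K) (Xi (tfun G P hwf K) i) = Xi (tfun G P hwf K) i := by
  set t := tfun G P hwf K with htdef
  funext v
  by_cases hv : cyc P v
  · obtain ⟨j, hj⟩ := hv
    have htv : t v = j.val + 1 := tfun_get hP hwf K hj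
    have hCcyc : IsCycle G (P.get j) := hP.1 _ (by rw [show j = ⟨j.1, j.2⟩ from rfl]; exact P.get_mem ⟨j.1, j.2⟩)
    obtain ⟨p, hpC, hpG⟩ := exists_pred hCcyc hj
    have htp : t p = j.val + 1 := tfun_get hP hwf K hpC
    have hpN : p ∈ Nbr G v := mem_Nbr.mpr hpG
    have hN : (Nbr G v).Nonempty := ⟨p, hpN⟩
    rw [fEx, if_pos hN]
    by_cases hA : ∀ u ∈ Nbr G v, t u ≤ t v
    · rw [if_pos hA]
      show decide _ = Xi t i v
      rw [Xi]
      rw [decide_eq_decide]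
      constructor
      · intro h
        have := h p hpN
        rw [Xi, decide_eq_true_eq] at this
        omega
      · intro h u hu
        rw [Xi, decide_eq_true_eq]
        exact le_trans (hA u hu) h
    · rw [if_neg hA]
      push_neg at hA
      obtain ⟨u₀, hu₀N, hu₀⟩ := hA
      have hcard : (Nbr G v).card ≤ 2 := by
        have h1 : Set.ncard {u : Fin n | G u v} = (Nbr G v).card :=
          Set.ncard_eq_toFinset_card _ _
        have := hdeg v
        omega
      have hpu : p ≠ u₀ := by
        intro h
        rw [← h, htp, htv] at hu₀
        omega
      have honly : ∀ c ∈ Nbr G v, c = p ∨ c = u₀ := by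
        intro c hc
        by_contra hcc
        push_neg at hcc
        have hsub : ({p, u₀, c} : Finset (Fin n)) ⊆ Nbr G v := by
          intro w hw
          simp only [Finset.mem_insert, Finset.mem_singleton] at hw
          rcases hw with rfl | rfl | rfl
          · exact hpN
          · exact hu₀N
          · exact hc
        have h3 : ({p, u₀, c} : Finset (Fin n)).card = 3 := by
          rw [Finset.card_eq_three]
          exact ⟨p, u₀, c, hpu, Ne.symm hcc.1, Ne.symm hcc.2, rfl⟩
        have := Finset.card_le_card hsub
        omega
      show decide _ = Xi t i v
      rw [Xi]
      rw [decide_eq_decide]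
      constructor
      · rintro ⟨u, hu, hxu⟩
        rw [Xi, decide_eq_true_eq] at hxu
        rcases honly u hu with rfl | rfl
        · omega
        · omega
      · intro h
        refine ⟨p, hpN, ?_⟩
        rw [Xi, decide_eq_true_eq]
        omega
  · by_cases hN : (Nbr G v).Nonempty
    · have htv : t v = (Nbr G v).sup t := tfun_sup hwf K hv hN
      have hA : ∀ u ∈ Nbr G v, t u ≤ t v := fun u hu => htv ▸ Finset.le_sup hu
      rw [fEx, if_pos hN, if_pos hA]
      show decide _ = Xi t i v
      rw [Xi]
      rw [decide_eq_decide]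
      constructor
      · intro h
        rw [htv, Finset.sup_le_iff]
        intro u hu
        have := h u hu
        rw [Xi, decide_eq_true_eq] at this
        exact this
      · intro h u hu
        rw [Xi, decide_eq_true_eq]
        exact le_trans (hA u hu) h
    · have htv : t v = K := tfun_src hwf K hv hN
      rw [fEx, if_neg hN, Xi]
      symm
      rw [decide_eq_false_iff_not]
      omega
end Aux6
/-- if `G` has maximum in-degree at most two and no two independent
cycles, then every monotone Boolean network with interaction graph `G` has at most
`ν(G)+1` fixed points, and some monotone Boolean network with interaction graph `G`
has exactly `ν(G)+1` fixed points. -/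
theorem stmt12 {n : ℕ} (G : Fin n → Fin n → Prop)
    (hdeg : ∀ v : Fin n, Set.ncard {u : Fin n | G u v} ≤ 2)
    (hind : ¬ ∃ C₁ C₂ : List (Fin n),
      IsCycle G C₁ ∧ IsCycle G C₂ ∧ Independent G C₁ C₂) :
    (∀ f : (Fin n → Bool) → Fin n → Bool, Monotone f →
      (∀ u v, G u v ↔ Depends f u v) →
      Set.ncard {x : Fin n → Bool | f x = x} ≤ nu G + 1) ∧
    (∃ f : (Fin n → Bool) → Fin n → Bool, Monotone f ∧
      (∀ u v, G u v ↔ Depends f u v) ∧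
      Set.ncard {x : Fin n → Bool | f x = x} = nu G + 1) := by
  constructor
  · exact fun f hf hG => upper_bound hdeg hind hf hG
  · obtain ⟨P, hP, hPlen⟩ := nu_attained G
    have hwf := rel_wf hP hPlen
    set t := tfun G P hwf (nu G + 1) with ht
    refine ⟨fEx G t, fEx_monotone t, fEx_graph t, ?_⟩
    apply le_antisymm (upper_bound hdeg hind (fEx_monotone t) (fEx_graph t))
    have hfixed : ∀ i : Fin (nu G + 1), fEx G t (Xi t i.1) = Xi t i.1 :=
      fun i => fEx_fixed hdeg hP hwf (nu G + 1) i.1 i.2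
    have hmono2 : ∀ (i i' : Fin (nu G + 1)), i.1 < i'.1 → Xi t i.1 ≠ Xi t i'.1 := by
      intro i i' hlt heq
      have hj : i'.1 - 1 < P.length := by rw [hPlen]; omega
      have hCne : P.get ⟨i'.1 - 1, hj⟩ ≠ [] := (hP.1 _ (P.get_mem ⟨_, hj⟩)).1
      obtain ⟨v, hv⟩ := List.exists_mem_of_ne_nil _ hCne
      have htv : t v = i'.1 := by
        have := tfun_get hP hwf (nu G + 1) (j := ⟨i'.1 - 1, hj⟩) hv
        rw [ht, this]
        simp
        omega
      have h1 : Xi t i'.1 v = true := by simp [Xi, htv]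
      have h2 : Xi t i.1 v = false := by simp [Xi, htv]; omega
      rw [heq, h1] at h2
      exact Bool.noConfusion h2
    have hinj : Function.Injective (fun i : Fin (nu G + 1) => Xi t i.1) := by
      intro i i' h
      by_contra hne
      rcases lt_or_gt_of_ne (Fin.val_ne_of_ne hne) with hlt | hlt
      · exact hmono2 i i' hlt h
      · exact hmono2 i' i hlt h.symm
    have hsub : Set.range (fun i : Fin (nu G + 1) => Xi t i.1) ⊆ {x | fEx G t x = x} := by
      rintro x ⟨i, rfl⟩
      exact hfixed i
    have hrn : (Set.range (fun i : Fin (nu G + 1) => Xi t i.1)).ncard = nu G + 1 := by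
      rw [← Set.image_univ, Set.ncard_image_of_injective _ hinj, Set.ncard_univ,
        Nat.card_eq_fintype_card, Fintype.card_fin]
    calc nu G + 1 = _ := hrn.symm
      _ ≤ _ := Set.ncard_le_ncard hsub (Set.toFinite _)
end
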